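/- Let A be the adjacency matrix of the path P_3, with eigenvalues √2, 0, −√2 and spectral projections E_{√2}, E_0, E_{−√2}. If R is a random variable with E[cos(√2 R)] = 0 and E[cos(2√2 R)] = −1/3, then M̂_R = (1/3)J. Moreover these conditions on R are necessary. -/
import Mathlib


open Matrix MeasureTheory Real
open scoped Matrix

noncomputable section

/-- Spectral projection of `A(P₃)` for the eigenvalue `√2`. -/
def Ep : Matrix (Fin 3) (Fin 3) ℝ :=
  (1 / 4 : ℝ) • !![1, Real.sqrt 2, 1; Real.sqrt 2, 2, Real.sqrt 2; 1, Real.sqrt 2, 1]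

/-- Spectral projection of `A(P₃)` for the eigenvalue `0`. -/
def Ez : Matrix (Fin 3) (Fin 3) ℝ :=
  (1 / 2 : ℝ) • !![1, 0, -1; 0, 0, 0; -1, 0, 1]

/-- Spectral projection of `A(P₃)` for the eigenvalue `-√2`. -/
def Em : Matrix (Fin 3) (Fin 3) ℝ :=
  (1 / 4 : ℝ) • !![1, -Real.sqrt 2, 1; -Real.sqrt 2, 2, -Real.sqrt 2; 1, -Real.sqrt 2, 1]

/-- The average mixing matrix of `P₃` under the sampling distribution `μ`:
`M̂_R = ∑ r, E r ∘ E r + 2 ∑_{s<r} E[cos ((θ r - θ s) R)] • (E r ∘ E s)` for the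
eigenvalues `√2 > 0 > -√2` of `A(P₃)`. -/
def ammP3 (μ : Measure ℝ) : Matrix (Fin 3) (Fin 3) ℝ :=
  Ep ⊙ Ep + Ez ⊙ Ez + Em ⊙ Em +
    (2 * ∫ t, Real.cos (Real.sqrt 2 * t) ∂μ) • (Ep ⊙ Ez) +
    (2 * ∫ t, Real.cos (Real.sqrt 2 * t) ∂μ) • (Ez ⊙ Em) +
    (2 * ∫ t, Real.cos (2 * Real.sqrt 2 * t) ∂μ) • (Ep ⊙ Em)

set_option maxHeartbeats 2000000 in
/-- for the path `P₃` (adjacency matrix with eigenvalues `√2, 0, -√2` and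
the projections above), a distribution `R` yields uniform average mixing
`M̂_R = (1/3) J` if and only if `E[cos (√2 R)] = 0` and `E[cos (2√2 R)] = -1/3`. -/
theorem uniform_average_mixing_P3_iff (μ : Measure ℝ) [IsProbabilityMeasure μ] :
    ((∫ t, Real.cos (Real.sqrt 2 * t) ∂μ) = 0 ∧
        (∫ t, Real.cos (2 * Real.sqrt 2 * t) ∂μ) = -(1 / 3)) ↔
      ammP3 μ = (1 / 3 : ℝ) • Matrix.of fun _ _ => (1 : ℝ) := by
  have h2 : Real.sqrt 2 * Real.sqrt 2 = 2 := Real.mul_self_sqrt (by norm_num)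
  set a := ∫ t, Real.cos (Real.sqrt 2 * t) ∂μ with ha
  set b := ∫ t, Real.cos (2 * Real.sqrt 2 * t) ∂μ with hb
  constructor
  · rintro ⟨h0, h1⟩
    ext i j
    fin_cases i <;> fin_cases j <;>
      simp [ammP3, Ep, Ez, Em, Matrix.hadamard, h0, h1] <;> nlinarith [h2]
  · intro h
    have h01 := congrFun (congrFun h 0) 1
    have h00 := congrFun (congrFun h 0) 0
    simp [ammP3, Ep, Ez, Em, Matrix.hadamard] at h01 h00
    constructor <;> nlinarith [h2, h01, h00]


end
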